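/- For every real ν > 0 and every y > 0, K_ν(y)/K_{ν+1}(y) > (1/y)·(y²/(√(y² + (ν+1)²) − (ν+1)) − 2(ν+1)). -/

import Mathlib

/-- The modified Bessel function of the second kind (Macdonald function),
via its integral representation `K_ν(y) = ∫_0^∞ exp(-y cosh t) cosh(ν t) dt`. -/
noncomputable def besselK (ν y : ℝ) : ℝ :=
  ∫ t in Set.Ioi (0 : ℝ), Real.exp (-y * Real.cosh t) * Real.cosh (ν * t)

/-!
From the integral representation, `cosh (ν t) cosh ((ν + 2) t) = cosh ((ν + 1) t) ^ 2 + sinh t ^ 2`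
makes the quadratic form `b² K_ν - 2ab K_{ν+1} + a² K_{ν+2}` positive definite, which gives the
Turán-type inequality `K_{ν+1}² < K_ν K_{ν+2}`. Integrating the derivative of
`exp (-y cosh t) sinh ((ν + 1) t)` over `(0, ∞)` gives the recurrence
`K_{ν+2} - K_ν = 2 (ν + 1) / y · K_{ν+1}`. Eliminating `K_ν` between the two, the bound becomes
`(y K_{ν+1} + (ν + 1) K_{ν+2})² < (y² + (ν + 1)²) K_{ν+2}²`.
-/

open Real Filter MeasureTheory Set Asymptotics

lemma cosh_le_exp_abs (x : ℝ) : cosh x ≤ exp |x| := by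
  rw [← cosh_abs, cosh_eq]
  linarith [exp_le_exp.2 (by linarith [abs_nonneg x] : -|x| ≤ |x|)]

lemma abs_sinh_le_exp_abs (x : ℝ) : |sinh x| ≤ exp |x| :=
  calc |sinh x| = sinh |x| := abs_sinh x
    _ ≤ cosh |x| := (sinh_lt_cosh _).le
    _ ≤ exp |x| := (cosh_le_exp_abs _).trans_eq (by rw [abs_abs])

lemma isBigO_comp_mul_exp_of_abs_le_exp_abs {h : ℝ → ℝ} (hh : ∀ x, |h x| ≤ exp |x|) (a : ℝ) :
    (fun t => h (a * t)) =O[atTop] fun t => exp (|a| * t) := by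
  refine IsBigO.of_bound 1 ?_
  filter_upwards [eventually_ge_atTop 0] with t ht
  rw [one_mul, norm_eq_abs, norm_eq_abs, abs_exp]
  simpa only [abs_mul, abs_of_nonneg ht] using hh (a * t)

lemma tendsto_mul_cosh_sub_mul_atTop {y : ℝ} (hy : 0 < y) (c : ℝ) :
    Tendsto (fun t => y * cosh t - c * t) atTop atTop := by
  have hquad : Tendsto (fun t => t * (y / 4 * t - c)) atTop atTop :=
    tendsto_id.atTop_mul_atTop₀
      (tendsto_atTop_add_const_right _ _ (tendsto_id.const_mul_atTop (by positivity)))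
  refine tendsto_atTop_mono' _ ?_ hquad
  filter_upwards [eventually_ge_atTop 0] with t ht
  have hcosh : t ^ 2 / 4 ≤ cosh t := by
    rw [cosh_eq]
    nlinarith [quadratic_le_exp_of_nonneg ht, exp_pos (-t)]
  nlinarith

lemma integrableOn_exp_neg_mul_cosh_mul (a : ℝ) {y c : ℝ} (hy : 0 < y) {g : ℝ → ℝ}
    (hg : Continuous g) (hgO : g =O[atTop] fun t => exp (c * t)) :
    IntegrableOn (fun t => exp (-y * cosh t) * g t) (Ioi a) := by
  refine integrable_of_isBigO_exp_neg one_pos (by fun_prop) ?_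
  refine ((isBigO_refl _ _).mul hgO).trans ?_
  simp only [← exp_add]
  refine (isLittleO_exp_comp_exp_comp.2 ?_).isBigO
  exact (tendsto_mul_cosh_sub_mul_atTop hy (c + 1)).congr fun t => by ring

lemma integrableOn_besselK_integrand (ν : ℝ) {y : ℝ} (hy : 0 < y) :
    IntegrableOn (fun t => exp (-y * cosh t) * cosh (ν * t)) (Ioi 0) :=
  integrableOn_exp_neg_mul_cosh_mul 0 hy (by fun_prop)
    (isBigO_comp_mul_exp_of_abs_le_exp_abs (fun x => (abs_of_pos (cosh_pos x)).trans_le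
      (cosh_le_exp_abs x)) ν)

lemma setIntegral_pos_of_forall_pos {X : Type*} [MeasurableSpace X] {μ : Measure X} {s : Set X}
    {f : X → ℝ} (hs : MeasurableSet s) (hμs : μ s ≠ 0) (hf : IntegrableOn f s μ)
    (hpos : ∀ x ∈ s, 0 < f x) : 0 < ∫ x in s, f x ∂μ := by
  rw [setIntegral_pos_iff_support_of_nonneg_ae
    ((ae_restrict_iff' hs).2 (ae_of_all _ fun x hx => (hpos x hx).le)) hf]
  rw [show Function.support f ∩ s = s from inter_eq_right.2 fun x hx => (hpos x hx).ne']
  exact pos_iff_ne_zero.2 hμs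

lemma setIntegral_Ioi_pos_of_forall_pos {f : ℝ → ℝ} {a : ℝ} (hf : IntegrableOn f (Ioi a))
    (hpos : ∀ t ∈ Ioi a, 0 < f t) : 0 < ∫ t in Ioi a, f t :=
  setIntegral_pos_of_forall_pos measurableSet_Ioi (by simp) hf hpos

lemma besselK_pos (ν : ℝ) {y : ℝ} (hy : 0 < y) : 0 < besselK ν y :=
  setIntegral_Ioi_pos_of_forall_pos (integrableOn_besselK_integrand ν hy)
    fun _ _ => mul_pos (exp_pos _) (cosh_pos _)

lemma cosh_mul_mul_cosh_add_two_mul (ν t : ℝ) :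
    cosh (ν * t) * cosh ((ν + 2) * t) = cosh ((ν + 1) * t) ^ 2 + sinh t ^ 2 := by
  rw [show ν * t = (ν + 1) * t - t by ring, show (ν + 2) * t = (ν + 1) * t + t by ring,
    cosh_sub, cosh_add]
  nlinarith [cosh_sq ((ν + 1) * t), cosh_sq t]

lemma cosh_add_two_mul_sub_cosh_mul (ν t : ℝ) :
    cosh ((ν + 2) * t) - cosh (ν * t) = 2 * sinh t * sinh ((ν + 1) * t) := by
  rw [show ν * t = (ν + 1) * t - t by ring, show (ν + 2) * t = (ν + 1) * t + t by ring,
    cosh_sub, cosh_add]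
  ring

lemma two_mul_mul_cosh_add_one_mul_lt (ν b : ℝ) {a t : ℝ} (ha : a ≠ 0) (ht : t ≠ 0) :
    2 * a * b * cosh ((ν + 1) * t) < b ^ 2 * cosh (ν * t) + a ^ 2 * cosh ((ν + 2) * t) := by
  have hC : 0 < cosh (ν * t) := cosh_pos _
  have hsinh : 0 < a ^ 2 * sinh t ^ 2 := by positivity
  refine lt_of_mul_lt_mul_left ?_ hC.le
  nlinarith [sq_nonneg (b * cosh (ν * t) - a * cosh ((ν + 1) * t)),
    cosh_mul_mul_cosh_add_two_mul ν t]

lemma besselK_add_one_sq_lt (ν : ℝ) {y : ℝ} (hy : 0 < y) :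
    besselK (ν + 1) y ^ 2 < besselK ν y * besselK (ν + 2) y := by
  set a := besselK ν y
  set b := besselK (ν + 1) y
  have ha : 0 < a := besselK_pos ν hy
  have hI := fun μ => integrableOn_besselK_integrand μ hy
  have hquad := setIntegral_Ioi_pos_of_forall_pos
    ((((hI ν).const_mul (b ^ 2)).add ((hI (ν + 2)).const_mul (a ^ 2))).sub
      ((hI (ν + 1)).const_mul (2 * a * b)))
    fun t ht => by
      have hpt := two_mul_mul_cosh_add_one_mul_lt ν b ha.ne' (ne_of_gt ht)
      have hexp := exp_pos (-y * cosh t)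
      simp only [Pi.add_apply, Pi.sub_apply]
      nlinarith
  rw [integral_sub' (((hI ν).const_mul _).add ((hI (ν + 2)).const_mul _))
    ((hI (ν + 1)).const_mul _), integral_add' ((hI ν).const_mul _) ((hI (ν + 2)).const_mul _),
    integral_const_mul, integral_const_mul, integral_const_mul] at hquad
  change 0 < b ^ 2 * a + a ^ 2 * besselK (ν + 2) y - 2 * a * b * b at hquad
  nlinarith

lemma besselK_add_two_sub_besselK (ν : ℝ) {y : ℝ} (hy : 0 < y) :
    besselK (ν + 2) y - besselK ν y = 2 * (ν + 1) / y * besselK (ν + 1) y := by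
  set F : ℝ → ℝ → ℝ := fun μ t => exp (-y * cosh t) * cosh (μ * t)
  have hI : ∀ μ, IntegrableOn (F μ) (Ioi 0) := fun μ => integrableOn_besselK_integrand μ hy
  have hderiv : ∀ t, HasDerivAt (fun t => exp (-y * cosh t) * sinh ((ν + 1) * t))
      ((ν + 1) * F (ν + 1) t - y / 2 * F (ν + 2) t + y / 2 * F ν t) t := by
    intro t
    have hexp := ((hasDerivAt_cosh t).const_mul (-y)).exp
    have hsinh := ((hasDerivAt_id t).const_mul (ν + 1)).sinh
    refine (hexp.mul hsinh).congr_deriv ?_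
    simp only [F, id, mul_one]
    linear_combination (exp (-y * cosh t) * y / 2) * cosh_add_two_mul_sub_cosh_mul ν t
  have hint₁ : IntegrableOn (fun t => (ν + 1) * F (ν + 1) t - y / 2 * F (ν + 2) t) (Ioi 0) :=
    ((hI _).const_mul _).sub ((hI _).const_mul _)
  have hint : IntegrableOn (fun t => (ν + 1) * F (ν + 1) t - y / 2 * F (ν + 2) t + y / 2 * F ν t)
      (Ioi 0) :=
    hint₁.add ((hI _).const_mul _)
  have hlim := tendsto_zero_of_hasDerivAt_of_integrableOn_Ioi (fun t _ => hderiv t) hint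
    (integrableOn_exp_neg_mul_cosh_mul 0 hy (by fun_prop)
      (isBigO_comp_mul_exp_of_abs_le_exp_abs abs_sinh_le_exp_abs _))
  have hibp := integral_Ioi_of_hasDerivAt_of_tendsto' (fun t _ => hderiv t) hint hlim
  rw [integral_add hint₁ ((hI _).const_mul _),
    integral_sub ((hI _).const_mul _) ((hI _).const_mul _), integral_const_mul,
    integral_const_mul, integral_const_mul] at hibp
  change (ν + 1) * besselK (ν + 1) y - y / 2 * besselK (ν + 2) y + y / 2 * besselK ν y = _ at hibp
  simp only [mul_zero, sinh_zero, sub_zero] at hibp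
  field_simp
  linarith

lemma lt_div_of_recurrence_of_sq_lt_mul {a b c y μ : ℝ} (hy : 0 < y) (hb : 0 < b) (hc : 0 < c)
    (hrec : c - a = 2 * μ / y * b) (hturan : b ^ 2 < a * c) :
    1 / y * (y ^ 2 / (sqrt (y ^ 2 + μ ^ 2) - μ) - 2 * μ) < a / b := by
  set s := sqrt (y ^ 2 + μ ^ 2)
  have hs : s ^ 2 = y ^ 2 + μ ^ 2 := sq_sqrt (by positivity)
  have hsμ : 0 < s - μ := sub_pos.2 (lt_sqrt_of_sq_lt (by nlinarith))
  have ha : a = c - 2 * μ * b / y := by rw [mul_div_right_comm]; linarith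
  have hturan' : y * b ^ 2 + 2 * μ * b * c < y * c ^ 2 := by
    rw [ha] at hturan
    field_simp at hturan
    linarith
  have hquad : (y * b + μ * c) ^ 2 < (s * c) ^ 2 :=
    calc (y * b + μ * c) ^ 2 = y * (y * b ^ 2 + 2 * μ * b * c) + μ ^ 2 * c ^ 2 := by ring
      _ < y * (y * c ^ 2) + μ ^ 2 * c ^ 2 := by gcongr
      _ = (s * c) ^ 2 := by rw [mul_pow, hs]; ring
  have hkey : y * b < (s - μ) * c := by
    nlinarith [abs_lt_of_sq_lt_sq' hquad (by positivity)]
  rw [ha, lt_div_iff₀ hb]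
  calc 1 / y * (y ^ 2 / (s - μ) - 2 * μ) * b = y * b / (s - μ) - 2 * μ * b / y := by
        field_simp
    _ < c - 2 * μ * b / y := by gcongr; rwa [div_lt_iff₀' hsμ]

theorem stmt_1_general (ν y : ℝ) (hy : 0 < y) :
    besselK ν y / besselK (ν + 1) y >
      (1 / y) * (y ^ 2 / (Real.sqrt (y ^ 2 + (ν + 1) ^ 2) - (ν + 1)) - 2 * (ν + 1)) :=
  lt_div_of_recurrence_of_sq_lt_mul hy (besselK_pos _ hy) (besselK_pos _ hy)
    (besselK_add_two_sub_besselK ν hy) (besselK_add_one_sq_lt ν hy)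

theorem stmt_1 (ν y : ℝ) (hν : 0 < ν) (hy : 0 < y) :
    besselK ν y / besselK (ν + 1) y >
      (1 / y) * (y ^ 2 / (Real.sqrt (y ^ 2 + (ν + 1) ^ 2) - (ν + 1)) - 2 * (ν + 1)) :=
  stmt_1_general ν y hy
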